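/- For every odd n ≥ 1, the eigenvalues λ_{2k}^n of the MDS integral operator on RP^n satisfy |λ_{2k}^n| = Θ(k^{-(n+3)/2}) as k → ∞, and the sequence (λ_{2k}^n)_{k≥1} has alternating signs. -/

import Mathlib

open MeasureTheory Real

noncomputable section

/-- The sphere `S^n` of radius one in `ℝ^{n+1}`. -/
abbrev unitSphere (n : ℕ) := Metric.sphere (0 : EuclideanSpace ℝ (Fin (n + 1))) 1

/-- The (n-dimensional) volume of the round sphere `S^n ⊂ ℝ^{n+1}`. -/
def sphereVolume (n : ℕ) : ℝ := 2 * π ^ (((n : ℝ) + 1) / 2) / Real.Gamma (((n : ℝ) + 1) / 2)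

/-- The constant `σ_n = -vol(S^{n-1})/vol(S^n)`. -/
def sigmaMDS (n : ℕ) : ℝ :=
  -(2 * π ^ ((n : ℝ) / 2) / Real.Gamma ((n : ℝ) / 2)) / sphereVolume n

/-- The Rodrigues constant `R_{2k}^n = 4^{-k} Γ(n/2)/Γ(n/2+2k)`. -/
def rodriguesR (n k : ℕ) : ℝ :=
  (1 / 4 ^ k) * Real.Gamma ((n : ℝ) / 2) / Real.Gamma ((n : ℝ) / 2 + 2 * k)

/-- `F_{2k}^n(t) = P_{2k}^n(t)(1-t²)^{(n-2)/2}
  = R_{2k}^n (d/dt)^{2k} (1-t²)^{2k+(n-2)/2}` (Rodrigues formula), where `P_{2k}^n` is the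
degree-`2k` Legendre polynomial for `S^n`. -/
def legendreF (n k : ℕ) (t : ℝ) : ℝ :=
  rodriguesR n k *
    iteratedDeriv (2 * k) (fun s : ℝ => (1 - s ^ 2) ^ (2 * (k : ℝ) + ((n : ℝ) - 2) / 2)) t

/-- The eigenvalue `λ_{2k}^n = σ_n ∫_0^1 arccos²(t) P_{2k}^n(t)(1-t²)^{(n-2)/2} dt` of the MDS
integral operator on `ℝP^n` on degree-`2k` spherical harmonics. -/
def lamRP (n k : ℕ) : ℝ :=
  sigmaMDS n * ∫ t in (0 : ℝ)..1, Real.arccos t ^ 2 * legendreF n k t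

/-- `φ : S^n → ℝ` is a spherical harmonic of degree `k`: the restriction to the sphere of a
smooth function on `ℝ^{n+1}` which is homogeneous of degree `k` and harmonic. -/
def IsSphericalHarmonic (n k : ℕ) (φ : unitSphere n → ℝ) : Prop :=
  ∃ p : EuclideanSpace ℝ (Fin (n + 1)) → ℝ, ContDiff ℝ (⊤ : ℕ∞) p ∧
    (∀ (r : ℝ) (x), p (r • x) = r ^ k * p x) ∧
    (∀ x, ∑ i, fderiv ℝ (fun y => fderiv ℝ p y (EuclideanSpace.single i 1)) x
        (EuclideanSpace.single i 1) = 0) ∧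
    ∀ x : unitSphere n, φ x = p (x : EuclideanSpace ℝ (Fin (n + 1)))

end

namespace MDS13
open Real Set Filter

noncomputable def g (γ : ℝ) : ℝ → ℝ := fun s : ℝ => (1 - s ^ 2) ^ γ
noncomputable def h (γ : ℝ) (j : ℕ) : ℝ → ℝ := iteratedDeriv j (g γ)

lemma h_zero (γ : ℝ) : h γ 0 = g γ := iteratedDeriv_zero
lemma h_succ (γ : ℝ) (j : ℕ) : h γ (j+1) = deriv (h γ j) := iteratedDeriv_succ

lemma base_pos {t : ℝ} (ht : t ∈ Ioo (-1:ℝ) 1) : 0 < 1 - t ^ 2 := by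
  obtain ⟨h1, h2⟩ := ht; nlinarith

lemma rpow_shift {x : ℝ} (hx : 0 < x) (a : ℝ) : x ^ (a + 1) = x * x ^ a := by
  rw [Real.rpow_add hx, Real.rpow_one]; ring

lemma g_hasDerivAt (γ : ℝ) {t : ℝ} (ht : t ∈ Ioo (-1:ℝ) 1) :
    HasDerivAt (g γ) (-2*γ*t*(1-t^2)^(γ-1)) t := by
  have h1 : HasDerivAt (fun s : ℝ => 1 - s ^ 2) (-(2*t)) t := by
    simpa using ((hasDerivAt_pow 2 t).const_sub 1)
  have h2 := (Real.hasDerivAt_rpow_const (x := 1 - t^2) (p := γ)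
    (Or.inl (ne_of_gt (base_pos ht)))).comp t h1
  refine h2.congr_deriv ?_; ring

lemma h_one_eq (γ : ℝ) {t : ℝ} (ht : t ∈ Ioo (-1:ℝ) 1) :
    h γ 1 t = -2*γ*t*(1-t^2)^(γ-1) := by
  rw [h_succ, h_zero]; exact (g_hasDerivAt γ ht).deriv

/-- differentiability on the open interval -/
def D (γ : ℝ) (m : ℕ) : Prop := ∀ t ∈ Ioo (-1:ℝ) 1, DifferentiableAt ℝ (h γ m) t

/-- the basic first-order recurrence -/
def P (γ : ℝ) (m : ℕ) : Prop := ∀ t ∈ Ioo (-1:ℝ) 1,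
  (1 - t^2) * h γ (m+2) t
    = (2*(m:ℝ)+2-2*γ)*t*h γ (m+1) t - ((m:ℝ)+1)*(2*γ-(m:ℝ))*h γ m t

lemma hasDerivAt_h {γ : ℝ} {m : ℕ} (hD : D γ m) {t : ℝ} (ht : t ∈ Ioo (-1:ℝ) 1) :
    HasDerivAt (h γ m) (h γ (m+1) t) t := by
  rw [h_succ]; exact hasDerivAt_deriv_iff.mpr (hD t ht)

lemma h_one_hasDerivAt (γ : ℝ) {t : ℝ} (ht : t ∈ Ioo (-1:ℝ) 1) :
    HasDerivAt (fun s : ℝ => -2*γ*s*(1-s^2)^(γ-1))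
      (-2*γ*(1-t^2)^(γ-1) + 4*γ*(γ-1)*t^2*(1-t^2)^(γ-2)) t := by
  have h1 : HasDerivAt (fun s : ℝ => 1 - s ^ 2) (-(2*t)) t := by
    simpa using ((hasDerivAt_pow 2 t).const_sub 1)
  have h2 := (Real.hasDerivAt_rpow_const (x := 1 - t^2) (p := γ-1)
    (Or.inl (ne_of_gt (base_pos ht)))).comp t h1
  have h3 : HasDerivAt (fun s : ℝ => -2*γ*s) (-2*γ) t := by
    simpa using (hasDerivAt_id t).const_mul (-2*γ)
  have h4 := h3.mul h2
  refine h4.congr_deriv ?_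
  simp only [Function.comp_apply]
  rw [show γ - 1 - 1 = γ - 2 by ring]
  ring

lemma eventually_mem (t : ℝ) (ht : t ∈ Ioo (-1:ℝ) 1) :
    ∀ᶠ s in nhds t, s ∈ Ioo (-1:ℝ) 1 :=
  Filter.eventually_of_mem (isOpen_Ioo.mem_nhds ht) (fun _ hs => hs)

lemma package (γ : ℝ) : ∀ m : ℕ, D γ m ∧ D γ (m+1) ∧ P γ m := by
  intro m
  induction m with
  | zero =>
    have hD0 : D γ 0 := by
      intro t ht; rw [h_zero]; exact (g_hasDerivAt γ ht).differentiableAt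
    have hD1 : D γ 1 := by
      intro t ht
      have heq : h γ 1 =ᶠ[nhds t] (fun s : ℝ => -2*γ*s*(1-s^2)^(γ-1)) := by
        filter_upwards [eventually_mem t ht] with s hs using h_one_eq γ hs
      rw [heq.differentiableAt_iff]
      exact (h_one_hasDerivAt γ ht).differentiableAt
    refine ⟨hD0, hD1, ?_⟩
    intro t ht
    have heq : h γ 1 =ᶠ[nhds t] (fun s : ℝ => -2*γ*s*(1-s^2)^(γ-1)) := by
      filter_upwards [eventually_mem t ht] with s hs using h_one_eq γ hs
    have h2 : h γ 2 t = -2*γ*(1-t^2)^(γ-1) + 4*γ*(γ-1)*t^2*(1-t^2)^(γ-2) := by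
      rw [h_succ]
      rw [heq.deriv_eq]
      exact (h_one_hasDerivAt γ ht).deriv
    have hb := base_pos ht
    have e1 : (1-t^2) ^ (γ-1) = (1-t^2) * (1-t^2)^(γ-2) := by
      have : γ - 1 = (γ-2) + 1 := by ring
      rw [this, rpow_shift hb]
    have e0 : g γ t = (1-t^2) * (1-t^2)^(γ-1) := by
      have e := rpow_shift hb (γ-1)
      rw [show γ-1+1 = γ by ring] at e
      simpa [g] using e
    rw [h2, h_one_eq γ ht, h_zero, e0, e1]
    push_cast; ring
  | succ m ih =>
    obtain ⟨hDm, hDm1, hPm⟩ := ih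
    have hDm2 : D γ (m+2) := by
      intro t ht
      have heq : h γ (m+2) =ᶠ[nhds t]
          (fun s => ((2*(m:ℝ)+2-2*γ)*s*h γ (m+1) s - ((m:ℝ)+1)*(2*γ-(m:ℝ))*h γ m s)
            / (1-s^2)) := by
        filter_upwards [eventually_mem t ht] with s hs
        rw [eq_div_iff (ne_of_gt (base_pos hs))]
        rw [mul_comm]
        exact (hPm s hs)
      rw [heq.differentiableAt_iff]
      apply DifferentiableAt.div
      · exact (((differentiableAt_id.const_mul _).mul (hDm1 t ht)).sub
          ((hDm t ht).const_mul _))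
      · exact (differentiableAt_const _).sub (differentiableAt_pow 2)
      · exact ne_of_gt (base_pos ht)
    refine ⟨hDm1, hDm2, ?_⟩
    intro t ht
    -- differentiate P m at t
    have heq : (fun s => (1 - s^2) * h γ (m+2) s) =ᶠ[nhds t]
        (fun s => (2*(m:ℝ)+2-2*γ)*s*h γ (m+1) s - ((m:ℝ)+1)*(2*γ-(m:ℝ))*h γ m s) := by
      filter_upwards [eventually_mem t ht] with s hs using hPm s hs
    have hL : HasDerivAt (fun s => (1 - s^2) * h γ (m+2) s)
        (-(2*t) * h γ (m+2) t + (1-t^2) * h γ (m+3) t) t := by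
      have h1 : HasDerivAt (fun s : ℝ => 1 - s ^ 2) (-(2*t)) t := by
        simpa using ((hasDerivAt_pow 2 t).const_sub 1)
      exact h1.mul (hasDerivAt_h hDm2 ht)
    have hR : HasDerivAt
        (fun s => (2*(m:ℝ)+2-2*γ)*s*h γ (m+1) s - ((m:ℝ)+1)*(2*γ-(m:ℝ))*h γ m s)
        (((2*(m:ℝ)+2-2*γ)*(h γ (m+1) t) + (2*(m:ℝ)+2-2*γ)*t*(h γ (m+2) t))
          - ((m:ℝ)+1)*(2*γ-(m:ℝ))*(h γ (m+1) t)) t := by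
      have h1 : HasDerivAt (fun s : ℝ => (2*(m:ℝ)+2-2*γ)*s) (2*(m:ℝ)+2-2*γ) t := by
        simpa using (hasDerivAt_id t).const_mul (2*(m:ℝ)+2-2*γ)
      have h2 := h1.mul (hasDerivAt_h hDm1 ht)
      have h3 := (hasDerivAt_h hDm ht).const_mul (((m:ℝ)+1)*(2*γ-(m:ℝ)))
      refine (h2.sub h3).congr_deriv ?_
      try ring
    have hder : -(2*t) * h γ (m+2) t + (1-t^2) * h γ (m+3) t
        = ((2*(m:ℝ)+2-2*γ)*(h γ (m+1) t) + (2*(m:ℝ)+2-2*γ)*t*(h γ (m+2) t))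
          - ((m:ℝ)+1)*(2*γ-(m:ℝ))*(h γ (m+1) t) := by
      have := heq.deriv_eq
      rw [hL.deriv] at this
      rw [hR.deriv] at this
      exact this
    push_cast
    linear_combination hder

end MDS13

namespace MDS13
open Real Set Filter

lemma Ico_subset_Ioo : Ico (0:ℝ) 1 ⊆ Ioo (-1:ℝ) 1 := fun x hx => ⟨by linarith [hx.1], hx.2⟩

lemma zero_mem_Ioo : (0:ℝ) ∈ Ioo (-1:ℝ) 1 := by norm_num

lemma h_at_zero_rec (γ : ℝ) (m : ℕ) :
    h γ (m+2) 0 = -(((m:ℝ)+1)*(2*γ-(m:ℝ))) * h γ m 0 := by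
  have hP := (package γ m).2.2 0 zero_mem_Ioo
  norm_num at hP
  linarith [hP]

lemma h_zero_at_zero (γ : ℝ) : h γ 0 0 = 1 := by
  simp [h_zero, g]

lemma h_one_at_zero (γ : ℝ) : h γ 1 0 = 0 := by
  rw [h_one_eq γ zero_mem_Ioo]; ring

lemma h_odd_at_zero (γ : ℝ) : ∀ i : ℕ, h γ (2*i+1) 0 = 0 := by
  intro i
  induction i with
  | zero => simpa using h_one_at_zero γ
  | succ i ih =>
    have := h_at_zero_rec γ (2*i+1)
    rw [show 2*(i+1)+1 = (2*i+1)+2 by ring, this, ih, mul_zero]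

lemma h_even_at_zero (γ : ℝ) : ∀ i : ℕ,
    h γ (2*i) 0 = ∏ j ∈ Finset.range i, (-((2*(j:ℝ)+1) * (2*γ - 2*(j:ℝ)))) := by
  intro i
  induction i with
  | zero => simpa using h_zero_at_zero γ
  | succ i ih =>
    have := h_at_zero_rec γ (2*i)
    rw [show 2*(i+1) = (2*i)+2 by ring, this, ih, Finset.prod_range_succ]
    push_cast
    ring

lemma h_bound (γ : ℝ) : ∀ m : ℕ,
    (∃ K : ℝ, 0 ≤ K ∧ ∀ t ∈ Ico (0:ℝ) 1, |h γ m t| ≤ K * (1-t^2)^(γ - (m:ℝ))) ∧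
    (∃ K : ℝ, 0 ≤ K ∧ ∀ t ∈ Ico (0:ℝ) 1, |h γ (m+1) t| ≤ K * (1-t^2)^(γ - ((m:ℝ)+1))) := by
  intro m
  induction m with
  | zero =>
    constructor
    · exact ⟨1, zero_le_one, fun t ht => by
        have hb := base_pos (Ico_subset_Ioo ht)
        rw [h_zero]
        simp only [g]
        rw [abs_of_pos (Real.rpow_pos_of_pos hb γ)]
        rw [one_mul]
        norm_num⟩
    · refine ⟨2*|γ|, by positivity, fun t ht => ?_⟩
      have hb := base_pos (Ico_subset_Ioo ht)
      rw [h_one_eq γ (Ico_subset_Ioo ht)]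
      have h1 : |(-2)*γ*t*(1-t^2)^(γ-1)| = 2*|γ| *|t| *(1-t^2)^(γ-1) := by
        rw [abs_mul, abs_mul, abs_mul]
        rw [abs_of_pos (Real.rpow_pos_of_pos hb (γ-1))]
        norm_num
      calc |(-2)*γ*t*(1-t^2)^(γ-1)| = 2*|γ| *|t| *(1-t^2)^(γ-1) := h1
        _ ≤ 2*|γ| *1*(1-t^2)^(γ-1) := by
            apply mul_le_mul_of_nonneg_right _ (le_of_lt (Real.rpow_pos_of_pos hb _))
            have : |t| ≤ 1 := by
              rw [abs_le]; constructor <;> [linarith [ht.1]; linarith [ht.2]]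
            nlinarith [abs_nonneg γ]
        _ = 2*|γ| *(1-t^2)^(γ - (((0:ℕ):ℝ)+1)) := by norm_num
  | succ m ih =>
    obtain ⟨⟨K0, hK0, hb0⟩, ⟨K1, hK1, hb1⟩⟩ := ih
    have cast1 : (((m+1:ℕ)):ℝ) = (m:ℝ)+1 := by push_cast; ring
    have cast2 : (((m+1:ℕ)):ℝ)+1 = (m:ℝ)+2 := by push_cast; ring
    refine ⟨⟨K1, hK1, fun t ht => by rw [cast1]; exact hb1 t ht⟩,
      ⟨|2*(m:ℝ)+2-2*γ| *K1 + ((m:ℝ)+1)*|2*γ-(m:ℝ)| *K0, by positivity, fun t ht => ?_⟩⟩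
    have htI := Ico_subset_Ioo ht
    have hb := base_pos htI
    have hble : 1 - t^2 ≤ 1 := by nlinarith [ht.1]
    have hP := (package γ m).2.2 t htI
    have hx : h γ (m+2) t
        = ((2*(m:ℝ)+2-2*γ)*t*h γ (m+1) t - ((m:ℝ)+1)*(2*γ-(m:ℝ))*h γ m t) / (1-t^2) := by
      rw [eq_div_iff (ne_of_gt hb), mul_comm]; exact hP
    have ht1 : |t| ≤ 1 := by rw [abs_le]; constructor <;> [linarith [ht.1]; linarith [ht.2]]
    have hw : (1-t^2)^(γ-(m:ℝ)) ≤ (1-t^2)^(γ-((m:ℝ)+1)) :=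
      Real.rpow_le_rpow_of_exponent_ge hb hble (by linarith)
    have hnum : |(2*(m:ℝ)+2-2*γ)*t*h γ (m+1) t - ((m:ℝ)+1)*(2*γ-(m:ℝ))*h γ m t|
        ≤ (|2*(m:ℝ)+2-2*γ| *K1 + ((m:ℝ)+1)*|2*γ-(m:ℝ)| *K0) * (1-t^2)^(γ-((m:ℝ)+1)) := by
      have t1 : |(2*(m:ℝ)+2-2*γ)*t*h γ (m+1) t| ≤ |2*(m:ℝ)+2-2*γ| * (K1 * (1-t^2)^(γ-((m:ℝ)+1))) := by
        rw [abs_mul, abs_mul]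
        have := hb1 t ht
        have h2 : |2*(m:ℝ)+2-2*γ| * |t| ≤ |2*(m:ℝ)+2-2*γ| := by
          nlinarith [abs_nonneg (2*(m:ℝ)+2-2*γ)]
        calc |2*(m:ℝ)+2-2*γ| * |t| * |h γ (m+1) t|
            ≤ |2*(m:ℝ)+2-2*γ| * |t| * (K1 * (1-t^2)^(γ-((m:ℝ)+1))) := by
              apply mul_le_mul_of_nonneg_left this (by positivity)
          _ ≤ |2*(m:ℝ)+2-2*γ| * (K1 * (1-t^2)^(γ-((m:ℝ)+1))) := by
              have hp : (0:ℝ) ≤ K1 * (1-t^2)^(γ-((m:ℝ)+1)) := by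
                have := Real.rpow_pos_of_pos hb (γ-((m:ℝ)+1)); positivity
              nlinarith [h2]
      have t2 : |((m:ℝ)+1)*(2*γ-(m:ℝ))*h γ m t| ≤ ((m:ℝ)+1)*|2*γ-(m:ℝ)| * (K0 * (1-t^2)^(γ-((m:ℝ)+1))) := by
        rw [abs_mul, abs_mul, abs_of_nonneg (by positivity : (0:ℝ) ≤ (m:ℝ)+1)]
        have h0 := hb0 t ht
        have h0' : |h γ m t| ≤ K0 * (1-t^2)^(γ-((m:ℝ)+1)) := by
          calc |h γ m t| ≤ K0 * (1-t^2)^(γ-(m:ℝ)) := h0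
            _ ≤ K0 * (1-t^2)^(γ-((m:ℝ)+1)) := mul_le_mul_of_nonneg_left hw hK0
        apply mul_le_mul_of_nonneg_left h0'
        positivity
      calc |(2*(m:ℝ)+2-2*γ)*t*h γ (m+1) t - ((m:ℝ)+1)*(2*γ-(m:ℝ))*h γ m t|
          ≤ |(2*(m:ℝ)+2-2*γ)*t*h γ (m+1) t| + |((m:ℝ)+1)*(2*γ-(m:ℝ))*h γ m t| := abs_sub _ _
        _ ≤ |2*(m:ℝ)+2-2*γ| * (K1 * (1-t^2)^(γ-((m:ℝ)+1)))
              + ((m:ℝ)+1)*|2*γ-(m:ℝ)| * (K0 * (1-t^2)^(γ-((m:ℝ)+1))) := add_le_add t1 t2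
        _ = (|2*(m:ℝ)+2-2*γ| *K1 + ((m:ℝ)+1)*|2*γ-(m:ℝ)| *K0) * (1-t^2)^(γ-((m:ℝ)+1)) := by ring
    have hsplit : (1-t^2)^(γ-((m:ℝ)+1)) = (1-t^2) * (1-t^2)^(γ-((m:ℝ)+2)) := by
      have e := rpow_shift hb (γ-((m:ℝ)+2))
      rw [show γ-((m:ℝ)+2)+1 = γ-((m:ℝ)+1) by ring] at e
      exact e
    rw [cast2, hx, abs_div, abs_of_pos hb]
    rw [div_le_iff₀ hb]
    calc |(2*(m:ℝ)+2-2*γ)*t*h γ (m+1) t - ((m:ℝ)+1)*(2*γ-(m:ℝ))*h γ m t|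
        ≤ (|2*(m:ℝ)+2-2*γ| *K1 + ((m:ℝ)+1)*|2*γ-(m:ℝ)| *K0) * (1-t^2)^(γ-((m:ℝ)+1)) := hnum
      _ = (|2*(m:ℝ)+2-2*γ| *K1 + ((m:ℝ)+1)*|2*γ-(m:ℝ)| *K0) * (1-t^2)^(γ-((m:ℝ)+2)) * (1-t^2) := by
          rw [hsplit]; ring
end MDS13

namespace MDS13
open Real Set Filter

lemma h_energy (γ : ℝ) (m : ℕ) (hν : 0 < ((m:ℝ)+1)*(2*γ-(m:ℝ))) (hc : 0 < 2*γ-2*(m:ℝ)-1) :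
    ∀ t ∈ Ico (0:ℝ) 1,
      (h γ m t)^2 ≤ (h γ m 0)^2 + (h γ (m+1) 0)^2 / (((m:ℝ)+1)*(2*γ-(m:ℝ))) := by
  have hDm := (package γ m).1
  have hDm1 := (package γ m).2.1
  have hDm2 := (package γ (m+1)).2.1
  set ν : ℝ := ((m:ℝ)+1)*(2*γ-(m:ℝ)) with hνdef
  set E : ℝ → ℝ := fun t => (h γ m t)^2 + (1-t^2)*(h γ (m+1) t)^2/ν with hE
  have hEderiv : ∀ x ∈ Ioo (-1:ℝ) 1, HasDerivAt E
      (2*h γ m x*h γ (m+1) x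
        + ((-(2*x))*(h γ (m+1) x)^2 + (1-x^2)*(2*h γ (m+1) x*h γ (m+2) x))/ν) x := by
    intro x hx
    have d1 : HasDerivAt (fun s => (h γ m s)^2) (2*h γ m x*h γ (m+1) x) x := by
      have := (hasDerivAt_h hDm hx).pow 2
      refine this.congr_deriv ?_; push_cast; ring
    have d2 : HasDerivAt (fun s => (h γ (m+1) s)^2) (2*h γ (m+1) x*h γ (m+2) x) x := by
      have := (hasDerivAt_h hDm1 hx).pow 2
      refine this.congr_deriv ?_; push_cast; ring
    have d3 : HasDerivAt (fun s : ℝ => 1 - s ^ 2) (-(2*x)) x := by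
      simpa using ((hasDerivAt_pow 2 x).const_sub 1)
    have d4 := (d3.mul d2).div_const ν
    exact d1.add d4
  have hderiv_le : ∀ x ∈ Ioo (0:ℝ) 1, deriv E x ≤ 0 := by
    intro x hx
    have hx' : x ∈ Ioo (-1:ℝ) 1 := ⟨by linarith [hx.1], hx.2⟩
    have hP := (package γ m).2.2 x hx'
    rw [(hEderiv x hx').deriv]
    have key : (2*h γ m x*h γ (m+1) x) * ν
        + ((-(2*x))*(h γ (m+1) x)^2 + (1-x^2)*(2*h γ (m+1) x*h γ (m+2) x))
        = -(2*x*(2*γ-2*(m:ℝ)-1)) * (h γ (m+1) x)^2 := by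
      rw [hνdef]
      linear_combination (2 * h γ (m+1) x) * hP
    have hval : 2*h γ m x*h γ (m+1) x
        + ((-(2*x))*(h γ (m+1) x)^2 + (1-x^2)*(2*h γ (m+1) x*h γ (m+2) x))/ν
        = -(2*x*(2*γ-2*(m:ℝ)-1)) * (h γ (m+1) x)^2/ν := by
      rw [add_div' _ _ _ (ne_of_gt hν), key]
    rw [hval]
    apply div_nonpos_of_nonpos_of_nonneg _ (le_of_lt hν)
    have : 0 ≤ 2*x*(2*γ-2*(m:ℝ)-1) := by
      have := hx.1; positivity
    nlinarith [sq_nonneg (h γ (m+1) x)]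
  have hcont : ContinuousOn E (Ico (0:ℝ) 1) := by
    intro t ht
    exact ((hEderiv t (Ico_subset_Ioo ht)).differentiableAt.continuousAt).continuousWithinAt
  have hdiff : DifferentiableOn ℝ E (interior (Ico (0:ℝ) 1)) := by
    rw [interior_Ico]
    intro t ht
    exact ((hEderiv t ⟨by linarith [ht.1], ht.2⟩).differentiableAt).differentiableWithinAt
  have hanti : AntitoneOn E (Ico (0:ℝ) 1) := by
    apply antitoneOn_of_deriv_nonpos (convex_Ico 0 1) hcont hdiff
    intro x hx
    rw [interior_Ico] at hx
    exact hderiv_le x hx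
  intro t ht
  have h0mem : (0:ℝ) ∈ Ico (0:ℝ) 1 := by norm_num
  have hEle := hanti h0mem ht ht.1
  have hE0 : E 0 = (h γ m 0)^2 + (h γ (m+1) 0)^2/ν := by
    simp only [hE]; norm_num
  have hEt : (h γ m t)^2 ≤ E t := by
    simp only [hE]
    have hb := base_pos (Ico_subset_Ioo ht)
    have : 0 ≤ (1-t^2)*(h γ (m+1) t)^2/ν := by positivity
    linarith
  calc (h γ m t)^2 ≤ E t := hEt
    _ ≤ E 0 := hEle
    _ = (h γ m 0)^2 + (h γ (m+1) 0)^2/ν := hE0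

end MDS13

namespace MDS13
open Real Set Filter

noncomputable def f0 : ℝ → ℝ := fun t => (Real.arccos t)^2
noncomputable def f1 : ℝ → ℝ := fun t => -2 * Real.arccos t / Real.sqrt (1 - t^2)
noncomputable def f2 : ℝ → ℝ :=
  fun t => 2/(1-t^2) - 2*t*Real.arccos t/(Real.sqrt (1-t^2))^3

lemma mem_Ioo_ne {t : ℝ} (ht : t ∈ Ioo (-1:ℝ) 1) : t ≠ -1 ∧ t ≠ 1 :=
  ⟨ne_of_gt ht.1, ne_of_lt ht.2⟩

lemma sqrt_pos_of_mem {t : ℝ} (ht : t ∈ Ioo (-1:ℝ) 1) : 0 < Real.sqrt (1 - t^2) :=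
  Real.sqrt_pos.mpr (base_pos ht)

lemma f0_hasDeriv {t : ℝ} (ht : t ∈ Ioo (-1:ℝ) 1) : HasDerivAt f0 (f1 t) t := by
  have ha := Real.hasDerivAt_arccos (mem_Ioo_ne ht).1 (mem_Ioo_ne ht).2
  have := ha.pow 2
  refine this.congr_deriv ?_
  simp only [f1]
  push_cast
  field_simp
  try ring

lemma f1_hasDeriv {t : ℝ} (ht : t ∈ Ioo (-1:ℝ) 1) : HasDerivAt f1 (f2 t) t := by
  have hb := base_pos ht
  have hs := sqrt_pos_of_mem ht
  have ha := Real.hasDerivAt_arccos (mem_Ioo_ne ht).1 (mem_Ioo_ne ht).2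
  have hu : HasDerivAt (fun s : ℝ => 1 - s ^ 2) (-(2*t)) t := by
    simpa using ((hasDerivAt_pow 2 t).const_sub 1)
  have hsq := (Real.hasDerivAt_sqrt (ne_of_gt hb)).comp t hu
  have hinv := hsq.inv (ne_of_gt hs)
  have hnum : HasDerivAt (fun s : ℝ => -2 * Real.arccos s) (-2 * (-(1 / Real.sqrt (1 - t^2)))) t :=
    ha.const_mul (-2)
  have hprod := hnum.mul hinv
  have heq : f1 = fun s : ℝ => (-2 * Real.arccos s) * (Real.sqrt (1 - s^2))⁻¹ := by
    funext s; simp [f1, div_eq_mul_inv]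
  rw [heq]
  refine hprod.congr_deriv ?_
  simp only [f2, Pi.inv_apply, Function.comp_apply]
  set S := Real.sqrt (1-t^2) with hS
  have h2 : (1:ℝ) - t^2 = S^2 := (Real.sq_sqrt (le_of_lt hb)).symm
  rw [h2]
  field_simp
  linear_combination (0:ℝ) * h2

lemma f0_at_zero : f0 0 = π^2/4 := by
  simp [f0, Real.arccos_zero]; ring

lemma f1_at_zero : f1 0 = -π := by
  simp [f1, Real.arccos_zero]
  ring

lemma f0_at_one : f0 1 = 0 := by simp [f0, Real.arccos_one]

lemma f1_at_one : f1 1 = 0 := by simp [f1, Real.arccos_one]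

lemma arccos_mem {t : ℝ} (ht : t ∈ Ico (0:ℝ) 1) :
    0 < Real.arccos t ∧ Real.arccos t ≤ π/2 := by
  exact ⟨Real.arccos_pos.mpr ht.2, Real.arccos_le_pi_div_two.mpr ht.1⟩

lemma f0_bound {t : ℝ} (ht : t ∈ Icc (0:ℝ) 1) : |f0 t| ≤ π^2/4 := by
  have h1 : 0 ≤ Real.arccos t := Real.arccos_nonneg t
  have h2 : Real.arccos t ≤ π/2 := Real.arccos_le_pi_div_two.mpr ht.1
  rw [f0, abs_of_nonneg (by positivity)]
  nlinarith

lemma f1_bound {t : ℝ} (ht : t ∈ Ico (0:ℝ) 1) :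
    |f1 t| ≤ π / Real.sqrt (1 - t^2) := by
  have hs := sqrt_pos_of_mem (Ico_subset_Ioo ht)
  have h1 : 0 ≤ Real.arccos t := Real.arccos_nonneg t
  have h2 : Real.arccos t ≤ π/2 := Real.arccos_le_pi_div_two.mpr ht.1
  rw [f1, abs_div, abs_of_pos hs, abs_of_nonpos (by nlinarith : -2 * Real.arccos t ≤ 0)]
  rw [div_le_div_iff₀ hs hs]
  nlinarith [hs]

/-- the inequality `0 ≤ sin θ - θ cos θ` on `[0, π/2]` -/
lemma sin_sub_mul_cos_nonneg {θ : ℝ} (h0 : 0 ≤ θ) (h1 : θ ≤ π/2) :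
    0 ≤ Real.sin θ - θ * Real.cos θ := by
  set ψ : ℝ → ℝ := fun x => Real.sin x - x * Real.cos x with hψ
  have hder : ∀ x, HasDerivAt ψ (x * Real.sin x) x := by
    intro x
    have d1 := Real.hasDerivAt_sin x
    have d2 := (hasDerivAt_id x).mul (Real.hasDerivAt_cos x)
    have := d1.sub d2
    refine this.congr_deriv ?_
    simp [id_eq]
    try ring
  have hmono : MonotoneOn ψ (Icc 0 (π/2)) := by
    apply monotoneOn_of_deriv_nonneg (convex_Icc 0 (π/2))
    · exact fun x _ => (hder x).differentiableAt.continuousAt.continuousWithinAt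
    · exact fun x _ => (hder x).differentiableAt.differentiableWithinAt
    · intro x hx
      rw [interior_Icc] at hx
      rw [(hder x).deriv]
      have hsin : 0 ≤ Real.sin x := Real.sin_nonneg_of_nonneg_of_le_pi (le_of_lt hx.1)
        (by linarith [Real.pi_pos, hx.2])
      nlinarith [hx.1]
  have h0m : (0:ℝ) ∈ Icc 0 (π/2) := ⟨le_refl 0, by positivity⟩
  have := hmono h0m ⟨h0, h1⟩ h0
  simpa [hψ] using this

/-- the inequality `sin θ - θ cos θ ≤ sin³ θ` on `[0, π/2]` -/
lemma sin_sub_mul_cos_le {θ : ℝ} (h0 : 0 ≤ θ) (h1 : θ ≤ π/2) :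
    Real.sin θ - θ * Real.cos θ ≤ (Real.sin θ)^3 := by
  have hcos : 0 ≤ Real.cos θ := Real.cos_nonneg_of_mem_Icc ⟨by linarith [Real.pi_pos], h1⟩
  have hkey : Real.sin θ * Real.cos θ ≤ θ := by
    have := Real.sin_le (by linarith : 0 ≤ 2*θ)
    rw [Real.sin_two_mul] at this
    linarith
  have hpyth := Real.sin_sq_add_cos_sq θ
  have hsin0 : 0 ≤ Real.sin θ := Real.sin_nonneg_of_nonneg_of_le_pi h0 (by linarith [Real.pi_pos])
  have hstep : Real.sin θ * Real.cos θ * Real.cos θ ≤ θ * Real.cos θ :=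
    mul_le_mul_of_nonneg_right hkey hcos
  have e : (Real.sin θ)^3 = Real.sin θ - Real.sin θ * (Real.cos θ)^2 := by
    linear_combination (Real.sin θ) * hpyth
  nlinarith [hstep, e]

lemma f2_bounds {t : ℝ} (ht : t ∈ Ico (0:ℝ) 1) : 0 ≤ f2 t ∧ f2 t ≤ 2 := by
  have htI := Ico_subset_Ioo ht
  have hb := base_pos htI
  have hs := sqrt_pos_of_mem htI
  set θ := Real.arccos t with hθ
  have hcos : Real.cos θ = t := Real.cos_arccos (by linarith [htI.1]) (le_of_lt htI.2)
  have hsin : Real.sin θ = Real.sqrt (1 - t^2) := Real.sin_arccos t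
  have hθ0 : 0 < θ := (arccos_mem ht).1
  have hθ1 : θ ≤ π/2 := (arccos_mem ht).2
  have hA := sin_sub_mul_cos_nonneg (le_of_lt hθ0) hθ1
  have hB := sin_sub_mul_cos_le (le_of_lt hθ0) hθ1
  rw [hsin, hcos] at hA hB
  have hf2 : f2 t = (2*Real.sqrt (1-t^2) - 2*θ*t) / (Real.sqrt (1-t^2))^3 := by
    simp only [f2, ← hθ]
    set S := Real.sqrt (1-t^2) with hS
    have h2 : (1:ℝ) - t^2 = S^2 := (Real.sq_sqrt (le_of_lt hb)).symm
    rw [h2]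
    field_simp
  constructor
  · rw [hf2]
    apply div_nonneg _ (by positivity)
    nlinarith [hA]
  · rw [hf2, div_le_iff₀ (by positivity)]
    nlinarith [hB]

end MDS13

namespace MDS13
open Real Set Filter MeasureTheory intervalIntegral

lemma base2_bound {x e : ℝ} (h1 : 1 ≤ x) (h2 : x ≤ 2) : x^e ≤ 2^|e| := by
  rcases le_or_gt 0 e with he | he
  · rw [abs_of_nonneg he]; exact Real.rpow_le_rpow (by linarith) h2 he
  · rw [abs_of_neg he]
    calc x^e ≤ 1 := Real.rpow_le_one_of_one_le_of_nonpos h1 (le_of_lt he)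
      _ ≤ 2^(-e) := by
          have := Real.rpow_le_rpow_of_exponent_le (by norm_num : (1:ℝ) ≤ 2)
            (by linarith : (0:ℝ) ≤ -e)
          rwa [Real.rpow_zero] at this

/-- decay bound with weight `(1-t)` only -/
lemma h_bound' (γ : ℝ) (m : ℕ) : ∃ K, 0 ≤ K ∧
    ∀ t ∈ Ioo (0:ℝ) 1, |h γ m t| ≤ K * (1-t)^(γ-(m:ℝ)) := by
  obtain ⟨K, hK, hb⟩ := (h_bound γ m).1
  refine ⟨K * 2^|γ-(m:ℝ)|, by positivity, fun t ht => ?_⟩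
  have h1 := hb t ⟨le_of_lt ht.1, ht.2⟩
  have hsplit : (1-t^2:ℝ) = (1-t)*(1+t) := by ring
  rw [hsplit, Real.mul_rpow (by linarith [ht.2]) (by linarith [ht.1])] at h1
  have h2 : (1+t:ℝ)^(γ-(m:ℝ)) ≤ 2^|γ-(m:ℝ)| :=
    base2_bound (by linarith [ht.1]) (by linarith [ht.2])
  have hp1 : (0:ℝ) < (1-t)^(γ-(m:ℝ)) := Real.rpow_pos_of_pos (by linarith [ht.2]) _
  calc |h γ m t| ≤ K * ((1-t)^(γ-(m:ℝ)) * (1+t)^(γ-(m:ℝ))) := h1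
    _ ≤ K * ((1-t)^(γ-(m:ℝ)) * 2^|γ-(m:ℝ)|) := by gcongr
    _ = K * 2^|γ-(m:ℝ)| * (1-t)^(γ-(m:ℝ)) := by ring

/-- integrability from a power bound -/
lemma integrable_aux {F : ℝ → ℝ} {c e : ℝ} (he : -1 < e)
    (hcont : ContinuousOn F (Ioo (0:ℝ) 1))
    (hbd : ∀ t ∈ Ioo (0:ℝ) 1, |F t| ≤ c * (1-t)^e) :
    IntervalIntegrable F volume 0 1 := by
  rw [intervalIntegrable_iff, uIoc_of_le (zero_le_one (α := ℝ)),
    integrableOn_Ioc_iff_integrableOn_Ioo]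
  apply Integrable.mono' (g := fun t => c * (1-t)^e)
  · have h1 : IntervalIntegrable (fun x : ℝ => x ^ e) volume 0 1 :=
      intervalIntegral.intervalIntegrable_rpow' he
    have h2 := (h1.comp_sub_left 1).symm
    norm_num at h2
    have h3 := h2.const_mul c
    rw [intervalIntegrable_iff, uIoc_of_le (zero_le_one (α := ℝ)),
      integrableOn_Ioc_iff_integrableOn_Ioo] at h3
    exact h3
  · exact hcont.aestronglyMeasurable measurableSet_Ioo
  · rw [ae_restrict_iff' measurableSet_Ioo]
    filter_upwards with t ht
    rw [Real.norm_eq_abs]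
    exact hbd t ht

/-- continuity on `[0,1]` of a function vanishing at `1` with a power bound -/
lemma contOn_Icc_aux {F : ℝ → ℝ} {C e : ℝ} (he : 0 < e)
    (hcont : ∀ t ∈ Ico (0:ℝ) 1, ContinuousAt F t)
    (hF1 : F 1 = 0)
    (hbd : ∀ t ∈ Ioo (0:ℝ) 1, |F t| ≤ C * (1-t)^e) :
    ContinuousOn F (Icc 0 1) := by
  intro t ht
  rcases lt_or_eq_of_le ht.2 with hlt | heq
  · exact (hcont t ⟨ht.1, hlt⟩).continuousWithinAt
  · rw [heq]
    rw [ContinuousWithinAt, hF1]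
    apply squeeze_zero_norm' (a := fun s => C * (1-s)^e)
    · have hhalf : ∀ᶠ s in nhdsWithin 1 (Icc (0:ℝ) 1), s ∈ Ioi (1/2:ℝ) :=
        ((eventually_gt_nhds (by norm_num : (1/2:ℝ) < 1)).filter_mono nhdsWithin_le_nhds)
      filter_upwards [self_mem_nhdsWithin, hhalf] with s hs hs2
      rcases lt_or_eq_of_le hs.2 with h2 | h2
      · rw [Real.norm_eq_abs]
        exact hbd s ⟨by simp at hs2; linarith, h2⟩
      · rw [h2, Real.norm_eq_abs, hF1]
        simp [Real.zero_rpow (ne_of_gt he)]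
    · have h1 : ContinuousAt (fun s : ℝ => (1 - s)) 1 :=
        (continuous_const.sub continuous_id).continuousAt
      have h0 : ContinuousAt (fun x : ℝ => x ^ e) ((1:ℝ) - 1) := by
        rw [sub_self]; exact Real.continuousAt_rpow_const 0 e (Or.inr (le_of_lt he))
      have h3 : ContinuousAt (fun s : ℝ => (1-s)^e) 1 := h0.comp h1
      have h4 : ContinuousWithinAt (fun s : ℝ => C * (1-s)^e) (Icc (0:ℝ) 1) 1 :=
        (continuousAt_const.mul h3).continuousWithinAt
      have h6 : C * ((1:ℝ) - 1)^e = 0 := by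
        rw [sub_self, Real.zero_rpow (ne_of_gt he), mul_zero]
      rw [ContinuousWithinAt, h6] at h4
      exact h4

end MDS13

namespace MDS13
open Real Set Filter MeasureTheory intervalIntegral

/-- the exponent in the Rodrigues formula -/
noncomputable def gmr (n k : ℕ) : ℝ := 2 * (k:ℝ) + ((n:ℝ) - 2) / 2

lemma Ioo01_subset : Ioo (0:ℝ) 1 ⊆ Ioo (-1:ℝ) 1 := fun x hx => ⟨by linarith [hx.1], hx.2⟩
lemma Ico01_subset : Ico (0:ℝ) 1 ⊆ Ioo (-1:ℝ) 1 := Ico_subset_Ioo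

lemma cont_f0 : Continuous f0 := Real.continuous_arccos.pow 2

lemma cont_f1_at {t : ℝ} (ht : t ∈ Ioo (-1:ℝ) 1) : ContinuousAt f1 t := by
  apply ContinuousAt.div
  · exact (continuous_const.mul Real.continuous_arccos).continuousAt
  · exact (Real.continuous_sqrt.comp (continuous_const.sub (continuous_pow 2))).continuousAt
  · exact ne_of_gt (sqrt_pos_of_mem ht)

lemma cont_f2_at {t : ℝ} (ht : t ∈ Ioo (-1:ℝ) 1) : ContinuousAt f2 t := by
  apply ContinuousAt.sub
  · apply ContinuousAt.div continuousAt_const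
    · exact (continuous_const.sub (continuous_pow 2)).continuousAt
    · exact ne_of_gt (base_pos ht)
  · apply ContinuousAt.div
    · exact ((continuous_const.mul continuous_id).mul Real.continuous_arccos).continuousAt
    · exact (((Real.continuous_sqrt.comp (continuous_const.sub (continuous_pow 2))).pow 3)).continuousAt
    · exact pow_ne_zero 3 (ne_of_gt (sqrt_pos_of_mem ht))

lemma f2_at_one : f2 1 = 0 := by
  simp [f2, Real.arccos_one]

lemma cont_h_at {γ : ℝ} {m : ℕ} {t : ℝ} (ht : t ∈ Ioo (-1:ℝ) 1) : ContinuousAt (h γ m) t :=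
  ((package γ m).1 t ht).continuousAt

lemma f1_bound' {t : ℝ} (ht : t ∈ Ioo (0:ℝ) 1) : |f1 t| ≤ π * (1-t)^(-(1/2):ℝ) := by
  have h1 := f1_bound (t := t) ⟨le_of_lt ht.1, ht.2⟩
  have h2 : Real.sqrt (1-t) ≤ Real.sqrt (1-t^2) := by
    apply Real.sqrt_le_sqrt; nlinarith [ht.1, ht.2]
  have h3 : (0:ℝ) < Real.sqrt (1-t) := Real.sqrt_pos.mpr (by linarith [ht.2])
  have h4 : π / Real.sqrt (1-t^2) ≤ π / Real.sqrt (1-t) := by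
    apply div_le_div_of_nonneg_left Real.pi_pos.le h3 h2
  have h5 : π / Real.sqrt (1-t) = π * (1-t)^(-(1/2):ℝ) := by
    rw [Real.sqrt_eq_rpow, Real.rpow_neg (by linarith [ht.2] : (0:ℝ) ≤ 1-t)]
    rw [div_eq_mul_inv]
  calc |f1 t| ≤ π / Real.sqrt (1-t^2) := h1
    _ ≤ π / Real.sqrt (1-t) := h4
    _ = π * (1-t)^(-(1/2):ℝ) := h5

theorem key_identity (n j : ℕ) (hn : 1 ≤ n) :
    ∃ err : ℝ,
      (∫ t in (0:ℝ)..1, Real.arccos t ^ 2 * h (gmr n (j+1)) (2*(j+1)) t)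
        = -π * h (gmr n (j+1)) (2*j) 0 + err
      ∧ |err| ≤ 2 * |h (gmr n (j+1)) (2*j) 0| := by
  set γ := gmr n (j+1) with hγdef
  have hnR : (1:ℝ) ≤ (n:ℝ) := by exact_mod_cast hn
  have hγ : γ = 2*(j:ℝ)+2+((n:ℝ)-2)/2 := by
    rw [hγdef, gmr]; push_cast; ring
  -- cast facts for exponents
  have hc2 : γ - ((2*j+2:ℕ):ℝ) = ((n:ℝ)-2)/2 := by push_cast; rw [hγ]; ring
  have hc1 : γ - ((2*j+1:ℕ):ℝ) = (n:ℝ)/2 := by push_cast; rw [hγ]; ring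
  have hc0 : γ - ((2*j:ℕ):ℝ) = ((n:ℝ)+2)/2 := by push_cast; rw [hγ]; ring
  obtain ⟨K2, hK2, hb2⟩ := h_bound' γ (2*j+2)
  obtain ⟨K1, hK1, hb1⟩ := h_bound' γ (2*j+1)
  obtain ⟨K0, hK0, hb0⟩ := h_bound' γ (2*j)
  rw [hc2] at hb2; rw [hc1] at hb1; rw [hc0] at hb0
  -- integrability of the three integrands
  have IIa : IntervalIntegrable (fun t => f0 t * h γ (2*j+2) t) volume 0 1 := by
    apply integrable_aux (c := π^2/4 * K2) (e := ((n:ℝ)-2)/2) (by linarith)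
    · exact fun t ht => (cont_f0.continuousAt.mul
        (cont_h_at (Ioo01_subset ht))).continuousWithinAt
    · intro t ht
      rw [abs_mul]
      have h1 := f0_bound (t := t) ⟨le_of_lt ht.1, le_of_lt ht.2⟩
      have h2 := hb2 t ht
      have hp : (0:ℝ) < (1-t)^(((n:ℝ)-2)/2) := Real.rpow_pos_of_pos (by linarith [ht.2]) _
      calc |f0 t| * |h γ (2*j+2) t| ≤ (π^2/4) * (K2 * (1-t)^(((n:ℝ)-2)/2)) := by
            apply mul_le_mul h1 h2 (abs_nonneg _) (by positivity)
        _ = π^2/4 * K2 * (1-t)^(((n:ℝ)-2)/2) := by ring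
  have IIb : IntervalIntegrable (fun t => f1 t * h γ (2*j+1) t) volume 0 1 := by
    apply integrable_aux (c := π * K1) (e := ((n:ℝ)-1)/2) (by linarith)
    · exact fun t ht => ((cont_f1_at (Ioo01_subset ht)).mul
        (cont_h_at (Ioo01_subset ht))).continuousWithinAt
    · intro t ht
      rw [abs_mul]
      have h1 := f1_bound' ht
      have h2 := hb1 t ht
      have ht1 : (0:ℝ) < 1 - t := by linarith [ht.2]
      have key : (1-t)^(-(1/2):ℝ) * (1-t)^((n:ℝ)/2) = (1-t)^(((n:ℝ)-1)/2) := by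
        rw [← Real.rpow_add ht1]; norm_num; ring_nf
      calc |f1 t| * |h γ (2*j+1) t|
          ≤ (π * (1-t)^(-(1/2):ℝ)) * (K1 * (1-t)^((n:ℝ)/2)) := by
            apply mul_le_mul h1 h2 (abs_nonneg _) (by positivity)
        _ = π * K1 * ((1-t)^(-(1/2):ℝ) * (1-t)^((n:ℝ)/2)) := by ring
        _ = π * K1 * (1-t)^(((n:ℝ)-1)/2) := by rw [key]
  -- sup bound for h (2j) via energy
  have hodd0 : h γ (2*j+1) 0 = 0 := h_odd_at_zero γ j
  have hsup : ∀ t ∈ Ico (0:ℝ) 1, |h γ (2*j) t| ≤ |h γ (2*j) 0| := by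
    intro t ht
    have hν : 0 < (((2*j:ℕ):ℝ)+1)*(2*γ-((2*j:ℕ):ℝ)) := by
      push_cast; rw [hγ]
      have : (0:ℝ) ≤ (j:ℝ) := Nat.cast_nonneg j
      nlinarith
    have hcc : 0 < 2*γ-2*((2*j:ℕ):ℝ)-1 := by
      push_cast; rw [hγ]; linarith
    have hE := h_energy γ (2*j) hν hcc t ht
    rw [hodd0] at hE
    norm_num at hE
    have := Real.sqrt_le_sqrt hE
    rwa [Real.sqrt_sq_eq_abs, Real.sqrt_sq_eq_abs] at this
  have IIc : IntervalIntegrable (fun t => f2 t * h γ (2*j) t) volume 0 1 := by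
    apply integrable_aux (c := 2 * |h γ (2*j) 0|) (e := (0:ℝ)) (by norm_num)
    · exact fun t ht => ((cont_f2_at (Ioo01_subset ht)).mul
        (cont_h_at (Ioo01_subset ht))).continuousWithinAt
    · intro t ht
      rw [abs_mul, Real.rpow_zero, mul_one]
      have h1 := f2_bounds (t := t) ⟨le_of_lt ht.1, ht.2⟩
      have h2 := hsup t ⟨le_of_lt ht.1, ht.2⟩
      have : |f2 t| ≤ 2 := by rw [abs_le]; constructor <;> linarith [h1.1, h1.2]
      apply mul_le_mul this h2 (abs_nonneg _) (by norm_num)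
  -- FTC step 1
  have step1 : (∫ t in (0:ℝ)..1, (f1 t * h γ (2*j+1) t + f0 t * h γ (2*j+2) t)) = 0 := by
    have hFTC := intervalIntegral.integral_eq_sub_of_hasDeriv_right_of_le
      (f := fun t => f0 t * h γ (2*j+1) t)
      (f' := fun t => f1 t * h γ (2*j+1) t + f0 t * h γ (2*j+2) t)
      zero_le_one
      ?_ ?_ (IIb.add IIa)
    · rw [hFTC]
      simp [f0_at_one, hodd0]
    · -- continuity on Icc
      apply contOn_Icc_aux (C := π^2/4 * K1) (e := (n:ℝ)/2) (by linarith)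
      · exact fun t ht => cont_f0.continuousAt.mul (cont_h_at (Ico01_subset ht))
      · rw [f0_at_one, zero_mul]
      · intro t ht
        rw [abs_mul]
        have h1 := f0_bound (t := t) ⟨le_of_lt ht.1, le_of_lt ht.2⟩
        have h2 := hb1 t ht
        calc |f0 t| * |h γ (2*j+1) t| ≤ (π^2/4) * (K1 * (1-t)^((n:ℝ)/2)) := by
              apply mul_le_mul h1 h2 (abs_nonneg _) (by positivity)
          _ = π^2/4 * K1 * (1-t)^((n:ℝ)/2) := by ring
    · -- derivative on Ioo
      intro x hx
      have hx' : x ∈ Ioo (-1:ℝ) 1 := Ioo01_subset hx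
      have hD := (package γ (2*j+1)).1
      have hd := (f0_hasDeriv hx').mul (hasDerivAt_h hD hx')
      have : (2*j+1)+1 = 2*j+2 := rfl
      rw [this] at hd
      exact hd.hasDerivWithinAt
  -- FTC step 2
  have step2 : (∫ t in (0:ℝ)..1, (f2 t * h γ (2*j) t + f1 t * h γ (2*j+1) t))
      = π * h γ (2*j) 0 := by
    have hFTC := intervalIntegral.integral_eq_sub_of_hasDeriv_right_of_le
      (f := fun t => f1 t * h γ (2*j) t)
      (f' := fun t => f2 t * h γ (2*j) t + f1 t * h γ (2*j+1) t)
      zero_le_one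
      ?_ ?_ (IIc.add IIb)
    · rw [hFTC]
      simp only [f1_at_one, f1_at_zero, zero_mul]
      ring
    · -- continuity on Icc
      apply contOn_Icc_aux (C := π * K0) (e := ((n:ℝ)+1)/2) (by linarith)
      · exact fun t ht => (cont_f1_at (Ico01_subset ht)).mul (cont_h_at (Ico01_subset ht))
      · rw [f1_at_one, zero_mul]
      · intro t ht
        rw [abs_mul]
        have h1 := f1_bound' ht
        have h2 := hb0 t ht
        have ht1 : (0:ℝ) < 1 - t := by linarith [ht.2]
        have key : (1-t)^(-(1/2):ℝ) * (1-t)^(((n:ℝ)+2)/2) = (1-t)^(((n:ℝ)+1)/2) := by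
          rw [← Real.rpow_add ht1]; norm_num; ring_nf
        calc |f1 t| * |h γ (2*j) t|
            ≤ (π * (1-t)^(-(1/2):ℝ)) * (K0 * (1-t)^(((n:ℝ)+2)/2)) := by
              apply mul_le_mul h1 h2 (abs_nonneg _) (by positivity)
          _ = π * K0 * ((1-t)^(-(1/2):ℝ) * (1-t)^(((n:ℝ)+2)/2)) := by ring
          _ = π * K0 * (1-t)^(((n:ℝ)+1)/2) := by rw [key]
    · -- derivative on Ioo
      intro x hx
      have hx' : x ∈ Ioo (-1:ℝ) 1 := Ioo01_subset hx
      have hD := (package γ (2*j)).1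
      have hd := (f1_hasDeriv hx').mul (hasDerivAt_h hD hx')
      exact hd.hasDerivWithinAt
  -- combine
  refine ⟨∫ t in (0:ℝ)..1, f2 t * h γ (2*j) t, ?_, ?_⟩
  · have e1 := intervalIntegral.integral_add IIb IIa
    have e2 := intervalIntegral.integral_add IIc IIb
    rw [step1] at e1
    rw [step2] at e2
    have hint : (∫ t in (0:ℝ)..1, Real.arccos t ^ 2 * h γ (2*(j+1)) t)
        = ∫ t in (0:ℝ)..1, f0 t * h γ (2*j+2) t := by
      congr 1
    linarith [e1, e2]
  · have hbnd : ∀ x ∈ Set.uIoc (0:ℝ) 1, ‖f2 x * h γ (2*j) x‖ ≤ 2 * |h γ (2*j) 0| := by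
      intro x hx
      rw [uIoc_of_le (zero_le_one (α := ℝ))] at hx
      rcases lt_or_eq_of_le hx.2 with hlt | heq
      · have hxI : x ∈ Ico (0:ℝ) 1 := ⟨le_of_lt hx.1, hlt⟩
        rw [Real.norm_eq_abs, abs_mul]
        have h1 := f2_bounds hxI
        have : |f2 x| ≤ 2 := by rw [abs_le]; constructor <;> linarith [h1.1, h1.2]
        apply mul_le_mul this (hsup x hxI) (abs_nonneg _) (by norm_num)
      · rw [heq, Real.norm_eq_abs, f2_at_one, zero_mul, abs_zero]
        positivity
    have hb := intervalIntegral.norm_integral_le_of_norm_le_const hbnd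
    simpa using hb

end MDS13

namespace MDS13
open Real Set Filter Finset

noncomputable def Pp (n j : ℕ) : ℝ :=
  ∏ i ∈ Finset.range j, ((2*(i:ℝ)+1) * (2*(gmr n (j+1)) - 2*(i:ℝ)))

lemma h0v_eq (n j : ℕ) : h (gmr n (j+1)) (2*j) 0 = (-1:ℝ)^j * Pp n j := by
  rw [h_even_at_zero (gmr n (j+1)) j, Pp]
  rw [show (∏ i ∈ Finset.range j, (-((2*(i:ℝ)+1) * (2*(gmr n (j+1)) - 2*(i:ℝ)))))
      = ∏ i ∈ Finset.range j, ((-1) * ((2*(i:ℝ)+1) * (2*(gmr n (j+1)) - 2*(i:ℝ)))) by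
    apply Finset.prod_congr rfl; intro i _; ring]
  rw [Finset.prod_mul_distrib, Finset.prod_const, Finset.card_range]

lemma gmr_lb (n j : ℕ) (hn : 1 ≤ n) : 2*(j:ℝ) + 3/2 ≤ gmr n (j+1) := by
  have hnR : (1:ℝ) ≤ (n:ℝ) := by exact_mod_cast hn
  rw [gmr]; push_cast; linarith

lemma Pp_pos (n j : ℕ) (hn : 1 ≤ n) : 0 < Pp n j := by
  apply Finset.prod_pos
  intro i hi
  have hij : (i:ℝ) < (j:ℝ) := by exact_mod_cast Finset.mem_range.mp hi
  have h1 := gmr_lb n j hn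
  have h2 : (0:ℝ) ≤ (i:ℝ) := Nat.cast_nonneg i
  nlinarith

lemma Gamma_prod (x : ℝ) (hx : 0 < x) : ∀ m : ℕ,
    Real.Gamma (x + (m:ℝ)) = Real.Gamma x * ∏ i ∈ Finset.range m, (x + (i:ℝ)) := by
  intro m
  induction m with
  | zero => simp
  | succ m ih =>
    have hne : x + (m:ℝ) ≠ 0 := by positivity
    have e1 : x + ((m+1:ℕ):ℝ) = (x + (m:ℝ)) + 1 := by push_cast; ring
    rw [e1, Real.Gamma_add_one hne, ih, Finset.prod_range_succ]
    ring

lemma rodR_eq (n k : ℕ) (hn : 1 ≤ n) :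
    rodriguesR n k = (1/4^k) / ∏ i ∈ Finset.range (2*k), ((n:ℝ)/2 + (i:ℝ)) := by
  have hx : (0:ℝ) < (n:ℝ)/2 := by
    have : (1:ℝ) ≤ (n:ℝ) := by exact_mod_cast hn
    linarith
  have hG := Gamma_prod ((n:ℝ)/2) hx (2*k)
  have e1 : (n:ℝ)/2 + ((2*k:ℕ):ℝ) = (n:ℝ)/2 + 2*(k:ℝ) := by push_cast; ring
  rw [e1] at hG
  rw [rodriguesR, hG]
  have hΓ : Real.Gamma ((n:ℝ)/2) ≠ 0 := ne_of_gt (Real.Gamma_pos_of_pos hx)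
  have hprod : (∏ i ∈ Finset.range (2*k), ((n:ℝ)/2 + (i:ℝ))) ≠ 0 := by
    apply ne_of_gt; apply Finset.prod_pos; intro i _
    have : (0:ℝ) ≤ (i:ℝ) := Nat.cast_nonneg i
    linarith
  field_simp

lemma rodR_pos (n k : ℕ) (hn : 1 ≤ n) : 0 < rodriguesR n k := by
  rw [rodR_eq n k hn]
  have hprod : (0:ℝ) < ∏ i ∈ Finset.range (2*k), ((n:ℝ)/2 + (i:ℝ)) := by
    apply Finset.prod_pos; intro i _
    have h1 : (0:ℝ) ≤ (i:ℝ) := Nat.cast_nonneg i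
    have : (1:ℝ) ≤ (n:ℝ) := by exact_mod_cast hn
    linarith
  positivity

/-- first telescoping lemma -/
lemma TL (A : ℝ) : ∀ m : ℕ,
    (∏ i ∈ Finset.range m, (A+4-2*(i:ℝ))) * ((A-2*(m:ℝ)+4)*(A-2*(m:ℝ)+2))
      = (A+4)*(A+2) * ∏ i ∈ Finset.range m, (A-2*(i:ℝ)) := by
  intro m
  induction m with
  | zero => simp
  | succ m ih =>
    rw [Finset.prod_range_succ, Finset.prod_range_succ]
    push_cast
    linear_combination (A - 2*(m:ℝ)) * ih

/-- second telescoping lemma -/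
lemma TL2 (x : ℝ) (hx : 0 < x) : ∀ d : ℕ,
    (∏ i ∈ Finset.range d, ((x+2*(i:ℝ))/(x+2*(i:ℝ)+2))) = x/(x+2*(d:ℝ)) := by
  intro d
  induction d with
  | zero => simp [div_self (ne_of_gt hx)]
  | succ d ih =>
    rw [Finset.prod_range_succ, ih]
    have h1 : (0:ℝ) < x + 2*(d:ℝ) := by positivity
    have h2 : (0:ℝ) < x + 2*(d:ℝ) + 2 := by positivity
    have e : x + 2*((d+1:ℕ):ℝ) = x + 2*(d:ℝ) + 2 := by push_cast; ring
    rw [e]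
    field_simp
    try ring

end MDS13

namespace MDS13
open Real Set Filter Finset

lemma gmr_succ (n j : ℕ) : 2 * gmr n (j+2) = 2 * gmr n (j+1) + 4 := by
  simp [gmr]; push_cast; ring

lemma CF (n : ℕ) (hn : 1 ≤ n) (d : ℕ) (hd : 2*d = n+3) : ∀ j : ℕ,
    rodriguesR n (j+1) * Pp n j
      = (1/((n:ℝ)*((n:ℝ)+2))) * ∏ i ∈ Finset.range d, ((2*(i:ℝ)+1)/(2*(j:ℝ)+2*(i:ℝ)+1)) := by
  have hx1 : (1:ℝ) ≤ (n:ℝ) := by exact_mod_cast hn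
  have h2d : 2*(d:ℝ) = (n:ℝ)+3 := by exact_mod_cast hd
  intro j
  induction j with
  | zero =>
    have hP0 : Pp n 0 = 1 := by simp [Pp]
    have hR : rodriguesR n 1 = (1/4) / (((n:ℝ)/2) * ((n:ℝ)/2+1)) := by
      rw [rodR_eq n 1 hn]
      norm_num [Finset.prod_range_succ]
    have hW : (∏ i ∈ Finset.range d, ((2*(i:ℝ)+1)/(2*((0:ℕ):ℝ)+2*(i:ℝ)+1))) = 1 := by
      apply Finset.prod_eq_one
      intro i _
      have : (0:ℝ) < 2*(i:ℝ)+1 := by positivity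
      rw [show 2*((0:ℕ):ℝ)+2*(i:ℝ)+1 = 2*(i:ℝ)+1 by push_cast; ring]
      exact div_self (ne_of_gt this)
    rw [hP0, hR, hW]
    have hn0 : (n:ℝ) ≠ 0 := by linarith
    have hn2 : (n:ℝ)+2 ≠ 0 := by linarith
    field_simp
    ring
  | succ j ih =>
    set J : ℝ := (j:ℝ) with hJ
    set x : ℝ := (n:ℝ) with hxdef
    set A : ℝ := 2 * gmr n (j+1) with hAdef
    have hAval : A = x + 4*J + 2 := by
      rw [hAdef, gmr]; push_cast; ring
    -- decompositions of Pp
    have hPj : Pp n j = (∏ i ∈ Finset.range j, (2*(i:ℝ)+1))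
        * (∏ i ∈ Finset.range j, (A - 2*(i:ℝ))) := by
      rw [Pp, ← Finset.prod_mul_distrib]
    have hPj1 : Pp n (j+1) = (∏ i ∈ Finset.range (j+1), (2*(i:ℝ)+1))
        * (∏ i ∈ Finset.range (j+1), (A + 4 - 2*(i:ℝ))) := by
      rw [Pp, ← Finset.prod_mul_distrib]
      apply Finset.prod_congr rfl
      intro i _
      rw [show A + 4 = 2 * gmr n (j+2) from by rw [gmr_succ n j, hAdef]]
    -- telescoping for the Qg part
    have htl := TL A (j+1)
    have hcast : ((j+1:ℕ):ℝ) = J + 1 := by push_cast; rw [hJ]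
    rw [hcast] at htl
    have hGsucc : (∏ i ∈ Finset.range (j+1), (A - 2*(i:ℝ)))
        = (∏ i ∈ Finset.range j, (A - 2*(i:ℝ))) * (A - 2*J) := by
      rw [Finset.prod_range_succ, hJ]
    have hQsucc : (∏ i ∈ Finset.range (j+1), (2*(i:ℝ)+1))
        = (∏ i ∈ Finset.range j, (2*(i:ℝ)+1)) * (2*J+1) := by
      rw [Finset.prod_range_succ, hJ]
    have hJ0 : (0:ℝ) ≤ J := by rw [hJ]; exact Nat.cast_nonneg j
    have hA2J : (0:ℝ) < A - 2*J := by rw [hAval]; linarith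
    -- E2 : Pp (j+1) * (A - 2J + 2) = (2J+1)*(A+4)*(A+2)*Pp j
    have E2 : Pp n (j+1) * (A - 2*J + 2) = (2*J+1)*(A+4)*(A+2)*Pp n j := by
      apply mul_right_cancel₀ (ne_of_gt hA2J)
      rw [hPj1, hPj, hQsucc]
      rw [hGsucc] at htl
      have ht2 : A - 2*(J+1) + 4 = A - 2*J + 2 := by ring
      have ht3 : A - 2*(J+1) + 2 = A - 2*J := by ring
      rw [ht2, ht3] at htl
      linear_combination ((∏ i ∈ Finset.range j, (2*(i:ℝ)+1)) * (2*J+1)) * htl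
    -- E1 : R (j+2) * ((x+4J+4)*(x+4J+6)) = R (j+1)
    have E1 : rodriguesR n (j+2) * ((x+4*J+4)*(x+4*J+6)) = rodriguesR n (j+1) := by
      rw [rodR_eq n (j+2) hn, rodR_eq n (j+1) hn]
      have hidx : 2*(j+2) = (2*(j+1))+1+1 := by ring
      rw [hidx, Finset.prod_range_succ, Finset.prod_range_succ]
      have hc1 : (((2*(j+1)):ℕ):ℝ) = 2*J+2 := by push_cast; rw [hJ]; ring
      have hc2 : (((2*(j+1)+1):ℕ):ℝ) = 2*J+3 := by push_cast; rw [hJ]; ring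
      rw [hc1, hc2]
      have hQpos : (0:ℝ) < ∏ i ∈ Finset.range (2*(j+1)), ((n:ℝ)/2 + (i:ℝ)) := by
        apply Finset.prod_pos; intro i _
        have : (0:ℝ) ≤ (i:ℝ) := Nat.cast_nonneg i
        linarith
      have hp1 : (0:ℝ) < x/2 + (2*J+2) := by rw [hxdef]; linarith
      have hp2 : (0:ℝ) < x/2 + (2*J+3) := by rw [hxdef]; linarith
      have h4 : (0:ℝ) < 4^(j+1) := by positivity
      rw [show (n:ℝ) = x from rfl]
      field_simp
      ring
    -- E3 : W (j+1) * (2J+1+2d) = W j * (2J+1)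
    have hWsplit : (∏ i ∈ Finset.range d, ((2*(i:ℝ)+1)/(2*(((j+1):ℕ):ℝ)+2*(i:ℝ)+1)))
        = (∏ i ∈ Finset.range d, ((2*(i:ℝ)+1)/(2*J+2*(i:ℝ)+1)))
          * (∏ i ∈ Finset.range d, ((2*J+1+2*(i:ℝ))/(2*J+1+2*(i:ℝ)+2))) := by
      rw [← Finset.prod_mul_distrib]
      apply Finset.prod_congr rfl
      intro i _
      have hi0 : (0:ℝ) ≤ (i:ℝ) := Nat.cast_nonneg i
      have p1 : (0:ℝ) < 2*J+2*(i:ℝ)+1 := by linarith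
      have p2 : (0:ℝ) < 2*J+1+2*(i:ℝ)+2 := by linarith
      have hcc : (2*((j+1:ℕ)):ℝ)+2*(i:ℝ)+1 = 2*J+1+2*(i:ℝ)+2 := by push_cast; rw [hJ]; ring
      rw [hcc]
      field_simp
      ring
    have htl2 := TL2 (2*J+1) (by linarith) d
    have E3 : (∏ i ∈ Finset.range d, ((2*(i:ℝ)+1)/(2*(((j+1):ℕ):ℝ)+2*(i:ℝ)+1)))
        * (2*J+1+2*(d:ℝ))
        = (∏ i ∈ Finset.range d, ((2*(i:ℝ)+1)/(2*J+2*(i:ℝ)+1))) * (2*J+1) := by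
      rw [hWsplit]
      have heqp : (∏ i ∈ Finset.range d, ((2*J+1+2*(i:ℝ))/(2*J+1+2*(i:ℝ)+2)))
          = (2*J+1)/(2*J+1+2*(d:ℝ)) := by
        rw [← htl2]
      rw [heqp]
      have hpos : (0:ℝ) < 2*J+1+2*(d:ℝ) := by
        have : (0:ℝ) ≤ (d:ℝ) := Nat.cast_nonneg d
        linarith
      field_simp
    -- assemble
    set R2 := rodriguesR n (j+2) with hR2
    set R1 := rodriguesR n (j+1) with hR1
    set P2 := Pp n (j+1) with hP2
    set P1 := Pp n j with hP1
    set W2 := (∏ i ∈ Finset.range d, ((2*(i:ℝ)+1)/(2*(((j+1):ℕ):ℝ)+2*(i:ℝ)+1))) with hW2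
    set W1 := (∏ i ∈ Finset.range d, ((2*(i:ℝ)+1)/(2*J+2*(i:ℝ)+1))) with hW1
    have hd0 : (0:ℝ) ≤ (d:ℝ) := Nat.cast_nonneg d
    have hp1 : (0:ℝ) < x+4*J+4 := by linarith
    have hp2 : (0:ℝ) < x+4*J+6 := by linarith
    have hp3 : (0:ℝ) < A-2*J+2 := by rw [hAval]; linarith
    have hp4 : (0:ℝ) < 2*J+1+2*(d:ℝ) := by linarith
    have hKpos : (0:ℝ) < (x+4*J+4)*(x+4*J+6)*(A-2*J+2)*(2*J+1+2*(d:ℝ)) := by positivity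
    apply mul_right_cancel₀ (ne_of_gt hKpos)
    have hfinal : (R1*P1) * ((2*J+1)*(A+4)*(A+2)*(2*J+1+2*(d:ℝ)))
        = (1/(x*(x+2))) * W2 * ((x+4*J+4)*(x+4*J+6)*(A-2*J+2)*(2*J+1+2*(d:ℝ))) := by
      rw [ih]
      rw [hAval]
      have h2dd : 2*(d:ℝ) = x+3 := h2d
      linear_combination (-(1/(x*(x+2))) * (x+4*J+4)*(x+4*J+6)*(2*J+1+2*(d:ℝ))) * E3
        + ((1/(x*(x+2))) * (x+4*J+4)*(x+4*J+6)*(2*J+1+2*(d:ℝ))*W2) * h2dd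
    calc R2 * P2 * ((x+4*J+4)*(x+4*J+6)*(A-2*J+2)*(2*J+1+2*(d:ℝ)))
        = (R2 * ((x+4*J+4)*(x+4*J+6))) * (P2 * (A-2*J+2)) * (2*J+1+2*(d:ℝ)) := by ring
      _ = R1 * ((2*J+1)*(A+4)*(A+2)*P1) * (2*J+1+2*(d:ℝ)) := by rw [E1, E2]
      _ = (R1*P1) * ((2*J+1)*(A+4)*(A+2)*(2*J+1+2*(d:ℝ))) := by ring
      _ = (1/(x*(x+2))) * W2 * ((x+4*J+4)*(x+4*J+6)*(A-2*J+2)*(2*J+1+2*(d:ℝ))) := hfinal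

end MDS13

namespace MDS13
open Real Set Filter Finset MeasureTheory

lemma sphereVolume_pos (n : ℕ) : 0 < sphereVolume n := by
  rw [sphereVolume]
  have h1 : (0:ℝ) < π ^ (((n:ℝ)+1)/2) := Real.rpow_pos_of_pos Real.pi_pos _
  have h2 : (0:ℝ) < Real.Gamma (((n:ℝ)+1)/2) := by
    apply Real.Gamma_pos_of_pos
    have : (0:ℝ) ≤ (n:ℝ) := Nat.cast_nonneg n
    linarith
  positivity

lemma sigma_neg (n : ℕ) (hn : 1 ≤ n) : sigmaMDS n < 0 := by
  rw [sigmaMDS]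
  have hnR : (1:ℝ) ≤ (n:ℝ) := by exact_mod_cast hn
  have h1 : (0:ℝ) < π ^ ((n:ℝ)/2) := Real.rpow_pos_of_pos Real.pi_pos _
  have h2 : (0:ℝ) < Real.Gamma ((n:ℝ)/2) := Real.Gamma_pos_of_pos (by linarith)
  have h3 := sphereVolume_pos n
  have h4 : (0:ℝ) < 2 * π ^ ((n:ℝ)/2) / Real.Gamma ((n:ℝ)/2) := by positivity
  exact div_neg_of_neg_of_pos (neg_neg_of_pos h4) h3

lemma legendreF_eq (n k : ℕ) (t : ℝ) :
    legendreF n k t = rodriguesR n k * h (gmr n k) (2*k) t := rfl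

lemma abs_h0v (n j : ℕ) (hn : 1 ≤ n) : |h (gmr n (j+1)) (2*j) 0| = Pp n j := by
  rw [h0v_eq, abs_mul, abs_pow, abs_neg, abs_one, one_pow, one_mul,
    abs_of_pos (Pp_pos n j hn)]

lemma main_form (n : ℕ) (hn : 1 ≤ n) (j : ℕ) : ∃ I : ℝ,
    lamRP n (j+1) = sigmaMDS n * rodriguesR n (j+1) * I
    ∧ (-1:ℝ)^j * I < 0
    ∧ (π-2) * Pp n j ≤ |I| ∧ |I| ≤ (π+2) * Pp n j := by
  obtain ⟨err, heq, herr⟩ := key_identity n j hn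
  have hP := Pp_pos n j hn
  have habs := abs_h0v n j hn
  have hpi := Real.pi_gt_three
  refine ⟨-π * h (gmr n (j+1)) (2*j) 0 + err, ?_, ?_, ?_, ?_⟩
  · rw [lamRP, ← heq]
    have hfun : (fun t => Real.arccos t ^ 2 * legendreF n (j+1) t)
        = fun t => rodriguesR n (j+1) * (Real.arccos t ^ 2 * h (gmr n (j+1)) (2*(j+1)) t) := by
      funext t; rw [legendreF_eq]; ring
    rw [hfun, intervalIntegral.integral_const_mul]
    ring
  · rw [h0v_eq]
    rw [abs_le] at herr
    have hsq : ((-1:ℝ)^j)^2 = 1 := by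
      rw [← pow_mul]
      exact Even.neg_one_pow ⟨j, by ring⟩
    have h1 : (-1:ℝ)^j * (-π * ((-1:ℝ)^j * Pp n j) + err)
        = -π * Pp n j + (-1:ℝ)^j * err := by
      have hh : (-1:ℝ)^j * ((-1:ℝ)^j) = 1 := by rw [← sq]; exact hsq
      linear_combination (-(π * Pp n j)) * hh
    rw [h1]
    have h2 : (-1:ℝ)^j * err ≤ |err| := by
      rcases Nat.even_or_odd j with he | ho
      · rw [he.neg_one_pow, one_mul]; exact le_abs_self err
      · rw [ho.neg_one_pow]; rw [neg_one_mul]; exact neg_le_abs err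
    have h3 : |err| ≤ 2 * Pp n j := by rw [habs] at herr; rw [abs_le]; exact herr
    nlinarith [h2, h3, hP, hpi]
  · rw [h0v_eq]
    have h3 : |err| ≤ 2 * Pp n j := by
      have := herr; rw [habs] at this; exact this
    have h4 : |(-π * ((-1:ℝ)^j * Pp n j))| = π * Pp n j := by
      simp [abs_mul, abs_pow, abs_of_pos hP, abs_of_pos Real.pi_pos]
    have h5 := abs_sub_abs_le_abs_sub (-π * ((-1:ℝ)^j * Pp n j))
      (-err)
    have h6 : |(-π * ((-1:ℝ)^j * Pp n j)) - -err| = |(-π * ((-1:ℝ)^j * Pp n j)) + err| := by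
      rw [sub_neg_eq_add]
    rw [h6, h4, abs_neg] at h5
    linarith [h5, h3]
  · rw [h0v_eq]
    have h3 : |err| ≤ 2 * Pp n j := by
      have := herr; rw [habs] at this; exact this
    have h4 : |(-π * ((-1:ℝ)^j * Pp n j))| = π * Pp n j := by
      simp [abs_mul, abs_pow, abs_of_pos hP, abs_of_pos Real.pi_pos]
    have h5 := abs_add_le (-π * ((-1:ℝ)^j * Pp n j)) err
    rw [h4] at h5
    linarith

lemma W_upper (d j : ℕ) :
    (∏ i ∈ Finset.range d, ((2*(i:ℝ)+1)/(2*(j:ℝ)+2*(i:ℝ)+1)))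
      ≤ ((2*(d:ℝ))/(2*(j:ℝ)+1))^d := by
  have hJ : (0:ℝ) ≤ (j:ℝ) := Nat.cast_nonneg j
  calc (∏ i ∈ Finset.range d, ((2*(i:ℝ)+1)/(2*(j:ℝ)+2*(i:ℝ)+1)))
      ≤ ∏ _i ∈ Finset.range d, ((2*(d:ℝ))/(2*(j:ℝ)+1)) := by
        apply Finset.prod_le_prod
        · intro i _
          have hi : (0:ℝ) ≤ (i:ℝ) := Nat.cast_nonneg i
          positivity
        · intro i hi
          have hiR : (i:ℝ)+1 ≤ (d:ℝ) := by
            exact_mod_cast Nat.succ_le_of_lt (Finset.mem_range.mp hi)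
          have hi0 : (0:ℝ) ≤ (i:ℝ) := Nat.cast_nonneg i
          rw [div_le_div_iff₀ (by linarith) (by linarith)]
          have := mul_le_mul (show 2*(i:ℝ)+1 ≤ 2*(d:ℝ) by linarith)
            (show 2*(j:ℝ)+1 ≤ 2*(j:ℝ)+2*(i:ℝ)+1 by linarith)
            (by linarith) (by linarith)
          linarith
    _ = ((2*(d:ℝ))/(2*(j:ℝ)+1))^d := by
        rw [Finset.prod_const, Finset.card_range]

lemma W_lower (d j : ℕ) :
    ((2*(j:ℝ)+2*(d:ℝ))⁻¹)^d
      ≤ (∏ i ∈ Finset.range d, ((2*(i:ℝ)+1)/(2*(j:ℝ)+2*(i:ℝ)+1))) := by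
  have hJ : (0:ℝ) ≤ (j:ℝ) := Nat.cast_nonneg j
  rcases Nat.eq_zero_or_pos d with hd0 | hd1
  · subst hd0; simp
  have hD : (1:ℝ) ≤ (d:ℝ) := by exact_mod_cast hd1
  calc ((2*(j:ℝ)+2*(d:ℝ))⁻¹)^d
      = ∏ _i ∈ Finset.range d, (2*(j:ℝ)+2*(d:ℝ))⁻¹ := by
        rw [Finset.prod_const, Finset.card_range]
    _ ≤ (∏ i ∈ Finset.range d, ((2*(i:ℝ)+1)/(2*(j:ℝ)+2*(i:ℝ)+1))) := by
        apply Finset.prod_le_prod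
        · intro i _
          positivity
        · intro i hi
          have hiR : (i:ℝ)+1 ≤ (d:ℝ) := by
            exact_mod_cast Nat.succ_le_of_lt (Finset.mem_range.mp hi)
          have hi0 : (0:ℝ) ≤ (i:ℝ) := Nat.cast_nonneg i
          rw [inv_eq_one_div, div_le_div_iff₀ (by linarith) (by linarith)]
          nlinarith [hiR, hi0, hJ]

end MDS13


open Asymptotics Filter

/-- for every odd `n ≥ 1`, the eigenvalues `λ_{2k}^n` of the MDS integral
operator on `ℝP^n` satisfy `|λ_{2k}^n| = Θ(k^{-(n+3)/2})` as `k → ∞`, and the sequence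
`(λ_{2k}^n)_{k ≥ 1}` has alternating signs. -/
theorem lamRP_asymptotics_and_alternating_of_odd (n : ℕ) (hodd : Odd n) (hn : 1 ≤ n) :
    ((fun k : ℕ => |lamRP n k|) =Θ[atTop]
        fun k : ℕ => (k : ℝ) ^ (-(((n : ℝ) + 3) / 2))) ∧
    (∀ k : ℕ, 1 ≤ k → lamRP n k * lamRP n (k + 1) < 0) := by
  obtain ⟨a, ha⟩ := hodd
  set d : ℕ := a + 2 with hdd
  have hd : 2*d = n+3 := by omega
  have hnR : (1:ℝ) ≤ (n:ℝ) := by exact_mod_cast hn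
  have hn0 : (0:ℝ) < (n:ℝ) := by linarith
  have hσ := MDS13.sigma_neg n hn
  have hσabs : 0 < |sigmaMDS n| := abs_pos.mpr (ne_of_lt hσ)
  have hcn : (0:ℝ) < 1/((n:ℝ)*((n:ℝ)+2)) := by positivity
  have hpi := Real.pi_gt_three
  have hD0 : (0:ℝ) < (d:ℝ) := by
    have : 1 ≤ d := by omega
    exact_mod_cast Nat.lt_of_lt_of_le Nat.zero_lt_one this
  -- the two-sided bound
  set c₁ : ℝ := |sigmaMDS n| * (π-2) * (1/((n:ℝ)*((n:ℝ)+2))) * (((2*(d:ℝ)+2))^d)⁻¹ with hc₁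
  set c₂ : ℝ := |sigmaMDS n| * (π+2) * (1/((n:ℝ)*((n:ℝ)+2))) * (2*(d:ℝ))^d with hc₂
  have hc₁pos : 0 < c₁ := by
    rw [hc₁]
    have h1 : (0:ℝ) < π - 2 := by linarith
    positivity
  have hc₂pos : 0 < c₂ := by
    rw [hc₂]
    have h1 : (0:ℝ) < π + 2 := by linarith
    positivity
  have hbound : ∀ j : ℕ,
      c₁ * ((((j:ℝ)+1))^d)⁻¹ ≤ |lamRP n (j+1)|
      ∧ |lamRP n (j+1)| ≤ c₂ * ((((j:ℝ)+1))^d)⁻¹ := by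
    intro j
    obtain ⟨I, hIeq, _hIsign, hIlo, hIhi⟩ := MDS13.main_form n hn j
    have hR := MDS13.rodR_pos n (j+1) hn
    have hP := MDS13.Pp_pos n j hn
    have hCF := MDS13.CF n hn d hd j
    have hJ : (0:ℝ) ≤ (j:ℝ) := Nat.cast_nonneg j
    have hWle := MDS13.W_upper d j
    have hWge := MDS13.W_lower d j
    have hlam : |lamRP n (j+1)| = |sigmaMDS n| * (rodriguesR n (j+1) * |I|) := by
      rw [hIeq, abs_mul, abs_mul, abs_of_pos hR]
      ring
    set W := (∏ i ∈ Finset.range d, ((2*(i:ℝ)+1)/(2*(j:ℝ)+2*(i:ℝ)+1))) with hW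
    have hRP : rodriguesR n (j+1) * MDS13.Pp n j = (1/((n:ℝ)*((n:ℝ)+2))) * W := hCF
    constructor
    · -- lower bound
      have h1 : |sigmaMDS n| * (rodriguesR n (j+1) * ((π-2) * MDS13.Pp n j))
          ≤ |lamRP n (j+1)| := by
        rw [hlam]
        apply mul_le_mul_of_nonneg_left _ (le_of_lt hσabs)
        exact mul_le_mul_of_nonneg_left hIlo (le_of_lt hR)
      have h2 : |sigmaMDS n| * (rodriguesR n (j+1) * ((π-2) * MDS13.Pp n j))
          = |sigmaMDS n| * (π-2) * ((1/((n:ℝ)*((n:ℝ)+2))) * W) := by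
        rw [← hRP]; ring
      have h3 : ((2*(j:ℝ)+2*(d:ℝ))⁻¹)^d ≤ W := hWge
      have h4 : (((2*(d:ℝ)+2))^d)⁻¹ * ((((j:ℝ)+1))^d)⁻¹ ≤ ((2*(j:ℝ)+2*(d:ℝ))⁻¹)^d := by
        have e1 : (((2*(d:ℝ)+2))^d)⁻¹ * ((((j:ℝ)+1))^d)⁻¹
            = (((2*(d:ℝ)+2) * ((j:ℝ)+1))^d)⁻¹ := by
          rw [mul_pow, mul_inv]
        rw [e1, ← inv_pow]
        apply pow_le_pow_left₀ (by positivity)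
        apply inv_anti₀ (by positivity)
        nlinarith
      calc c₁ * ((((j:ℝ)+1))^d)⁻¹
          = |sigmaMDS n| * (π-2) * (1/((n:ℝ)*((n:ℝ)+2)))
              * ((((2*(d:ℝ)+2))^d)⁻¹ * ((((j:ℝ)+1))^d)⁻¹) := by rw [hc₁]; ring
        _ ≤ |sigmaMDS n| * (π-2) * (1/((n:ℝ)*((n:ℝ)+2))) * W := by
            have hcoef : (0:ℝ) ≤ |sigmaMDS n| * (π-2) * (1/((n:ℝ)*((n:ℝ)+2))) := by
              have : (0:ℝ) < π - 2 := by linarith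
              positivity
            apply mul_le_mul_of_nonneg_left _ hcoef
            exact le_trans h4 h3
        _ = |sigmaMDS n| * (rodriguesR n (j+1) * ((π-2) * MDS13.Pp n j)) := by
            rw [h2]; ring
        _ ≤ |lamRP n (j+1)| := h1
    · -- upper bound
      have h1 : |lamRP n (j+1)|
          ≤ |sigmaMDS n| * (rodriguesR n (j+1) * ((π+2) * MDS13.Pp n j)) := by
        rw [hlam]
        apply mul_le_mul_of_nonneg_left _ (le_of_lt hσabs)
        exact mul_le_mul_of_nonneg_left hIhi (le_of_lt hR)
      have h2 : |sigmaMDS n| * (rodriguesR n (j+1) * ((π+2) * MDS13.Pp n j))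
          = |sigmaMDS n| * (π+2) * ((1/((n:ℝ)*((n:ℝ)+2))) * W) := by
        rw [← hRP]; ring
      have h3 : W ≤ ((2*(d:ℝ))/(2*(j:ℝ)+1))^d := hWle
      have h4 : ((2*(d:ℝ))/(2*(j:ℝ)+1))^d ≤ (2*(d:ℝ))^d * ((((j:ℝ)+1))^d)⁻¹ := by
        have e1 : (2*(d:ℝ))^d * ((((j:ℝ)+1))^d)⁻¹ = ((2*(d:ℝ))/((j:ℝ)+1))^d := by
          rw [div_pow]; rw [div_eq_mul_inv]
        rw [e1]
        apply pow_le_pow_left₀ (by positivity)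
        apply div_le_div_of_nonneg_left (by positivity) (by positivity)
        linarith
      calc |lamRP n (j+1)|
          ≤ |sigmaMDS n| * (π+2) * ((1/((n:ℝ)*((n:ℝ)+2))) * W) := by rw [← h2]; exact h1
        _ ≤ |sigmaMDS n| * (π+2) * ((1/((n:ℝ)*((n:ℝ)+2)))
              * ((2*(d:ℝ))^d * ((((j:ℝ)+1))^d)⁻¹)) := by
            have hcoef : (0:ℝ) ≤ |sigmaMDS n| * (π+2) := by positivity
            have := le_trans h3 h4
            apply mul_le_mul_of_nonneg_left _ hcoef
            exact mul_le_mul_of_nonneg_left this (le_of_lt hcn)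
        _ = c₂ * ((((j:ℝ)+1))^d)⁻¹ := by rw [hc₂]; ring
  have hexp : ∀ k : ℕ, 1 ≤ k →
      ((k:ℝ)) ^ (-(((n : ℝ) + 3) / 2)) = (((k:ℝ))^d)⁻¹ := by
    intro k hk
    have hk0 : (0:ℝ) < (k:ℝ) := by exact_mod_cast hk
    have hnval : (n:ℝ) = 2*(a:ℝ)+1 := by exact_mod_cast ha
    have he : -(((n : ℝ) + 3) / 2) = -((d:ℝ)) := by
      rw [hnval, hdd]; push_cast; ring
    rw [he, Real.rpow_neg (le_of_lt hk0), Real.rpow_natCast]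
  constructor
  · constructor
    · rw [Asymptotics.isBigO_iff]
      refine ⟨c₂, ?_⟩
      filter_upwards [eventually_ge_atTop 1] with k hk
      obtain ⟨j, rfl⟩ : ∃ j, k = j+1 := ⟨k-1, by omega⟩
      have hcast : (((j+1:ℕ)):ℝ) = (j:ℝ)+1 := by push_cast; ring
      rw [Real.norm_eq_abs, Real.norm_eq_abs, abs_abs, hexp (j+1) hk, hcast]
      have hpos : (0:ℝ) < (((j:ℝ)+1)^d)⁻¹ := by positivity
      rw [abs_of_pos hpos]
      exact (hbound j).2
    · rw [Asymptotics.isBigO_iff]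
      refine ⟨c₁⁻¹, ?_⟩
      filter_upwards [eventually_ge_atTop 1] with k hk
      obtain ⟨j, rfl⟩ : ∃ j, k = j+1 := ⟨k-1, by omega⟩
      have hcast : (((j+1:ℕ)):ℝ) = (j:ℝ)+1 := by push_cast; ring
      rw [Real.norm_eq_abs, Real.norm_eq_abs, abs_abs, hexp (j+1) hk, hcast]
      have hpos : (0:ℝ) < (((j:ℝ)+1)^d)⁻¹ := by positivity
      rw [abs_of_pos hpos]
      have h1 := (hbound j).1
      have he : (((j:ℝ)+1)^d)⁻¹ = c₁⁻¹ * (c₁ * (((j:ℝ)+1)^d)⁻¹) := by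
        field_simp
      rw [he]
      exact mul_le_mul_of_nonneg_left h1 (inv_nonneg.mpr hc₁pos.le)
  · intro k hk
    obtain ⟨j, rfl⟩ : ∃ j, k = j+1 := ⟨k-1, by omega⟩
    obtain ⟨I₁, hI1eq, hI1sign, _, _⟩ := MDS13.main_form n hn j
    obtain ⟨I₂, hI2eq, hI2sign, _, _⟩ := MDS13.main_form n hn (j+1)
    have hR1 := MDS13.rodR_pos n (j+1) hn
    have hR2 := MDS13.rodR_pos n (j+2) hn
    have hs : I₁ * I₂ < 0 := by
      have hprod := mul_pos_of_neg_of_neg hI1sign hI2sign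
      have hkey : ((-1:ℝ)^j * I₁) * ((-1:ℝ)^(j+1) * I₂) = -(I₁ * I₂) := by
        have : (-1:ℝ)^j * (-1:ℝ)^(j+1) = -1 := by
          rw [← pow_add]
          exact Odd.neg_one_pow ⟨j, by ring⟩
        calc ((-1:ℝ)^j * I₁) * ((-1:ℝ)^(j+1) * I₂)
            = ((-1:ℝ)^j * (-1:ℝ)^(j+1)) * (I₁ * I₂) := by ring
          _ = -(I₁ * I₂) := by rw [this]; ring
      rw [hkey] at hprod
      linarith
    have hσ2 : 0 < sigmaMDS n * sigmaMDS n := mul_pos_of_neg_of_neg hσ hσ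
    have : lamRP n (j+1) * lamRP n (j+1+1)
        = (sigmaMDS n * sigmaMDS n) * (rodriguesR n (j+1) * rodriguesR n (j+2)) * (I₁ * I₂) := by
      rw [hI1eq, show j+1+1 = j+2 from rfl, hI2eq]
      ring
    rw [this]
    apply mul_neg_of_pos_of_neg _ hs
    exact mul_pos hσ2 (mul_pos hR1 hR2)
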